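/- Assume k ≥ 2, let S be a nonempty proper finite subset of Fin N, and let SNR > 0 with σ² := k/(N·SNR). Set Δⱼ := ξⱼ(Fin N) − ξⱼ(S) for j = 1, 2, τ := (k/N)·Δ₂/(−Δ₁), and MSE(T) := ξ₁(T) + σ²·ξ₂(T). Then MSE(S) < MSE(Fin N) if and only if one of the following holds: (i) there exist i with 2 ≤ i ≤ k and j ∉ S such that uᵢ(j) ≠ 0, and SNR < τ; or (ii) uᵢ(j) = 0 for all 2 ≤ i ≤ k and all j ∉ S, and Δ₂ > 0. -/

import Mathlib

open Matrix

/-- Squared Frobenius norm `‖A‖_F² = trace(Aᵀ A)`. -/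
noncomputable def frobSq {m n : Type*} [Fintype m] [Fintype n] (A : Matrix m n ℝ) : ℝ :=
  Matrix.trace (Aᵀ * A)

section Aux

open Finset

lemma dot_mulVec_symm' {n : Type*} [Fintype n] (A : Matrix n n ℝ) (hA : Aᵀ = A)
    (x y : n → ℝ) : x ⬝ᵥ A *ᵥ y = y ⬝ᵥ A *ᵥ x := by
  rw [Matrix.dotProduct_mulVec, ← Matrix.mulVec_transpose, hA, dotProduct_comm]

lemma posDef_P_add_lap {N : ℕ} (G : SimpleGraph (Fin N)) [DecidableRel G.Adj]
    (hG : G.Connected) (μ : ℝ) (hμ : 0 < μ) (S : Finset (Fin N)) (hS : S.Nonempty) :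
    (Matrix.diagonal (fun j => if j ∈ S then (1:ℝ) else 0) + μ • G.lapMatrix ℝ).PosDef := by
  have hL := SimpleGraph.posSemidef_lapMatrix ℝ G
  have hPd : ∀ j : Fin N, (0:ℝ) ≤ if j ∈ S then (1:ℝ) else 0 := by
    intro j; split <;> norm_num
  have hP : (Matrix.diagonal (fun j => if j ∈ S then (1:ℝ) else 0)).PosSemidef :=
    Matrix.PosSemidef.diagonal hPd
  refine Matrix.PosDef.of_dotProduct_mulVec_pos ?_ ?_
  · refine hP.1.add (Matrix.IsHermitian.ext fun i j => ?_)
    simp only [Matrix.smul_apply, star_trivial, smul_eq_mul]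
    rw [show G.lapMatrix ℝ j i = G.lapMatrix ℝ i j from congrFun (congrFun (G.isSymm_lapMatrix (R := ℝ)) i) j]
  · intro x hx
    simp only [star_trivial, add_mulVec, dotProduct_add, Matrix.smul_mulVec,
      dotProduct_smul, smul_eq_mul]
    have h1 : 0 ≤ x ⬝ᵥ Matrix.diagonal (fun j => if j ∈ S then (1:ℝ) else 0) *ᵥ x := by
      simpa using hP.dotProduct_mulVec_nonneg x
    have h2 : 0 ≤ x ⬝ᵥ G.lapMatrix ℝ *ᵥ x := by simpa using hL.dotProduct_mulVec_nonneg x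
    rcases lt_or_eq_of_le h2 with h2' | h2'
    · nlinarith
    rcases lt_or_eq_of_le h1 with h1' | h1'
    · nlinarith
    exfalso
    have hconst : ∀ i j : Fin N, x i = x j := by
      have := (SimpleGraph.lapMatrix_toLinearMap₂'_apply'_eq_zero_iff_forall_reachable G x).mp
        (by rw [Matrix.toLinearMap₂'_apply']; exact h2'.symm)
      exact fun i j => this i j (hG.preconnected i j)
    obtain ⟨i₀, hi₀⟩ := hS
    have hsum : ∑ i : Fin N, x i * ((if i ∈ S then (1:ℝ) else 0) * x i) = 0 := by
      simpa [dotProduct, mulVec_diagonal] using h1'.symm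
    have hterm : ∀ i ∈ Finset.univ, (0:ℝ) ≤ x i * ((if i ∈ S then (1:ℝ) else 0) * x i) := by
      intro i _; split <;> simp [mul_self_nonneg]
    have hzero := (Finset.sum_eq_zero_iff_of_nonneg hterm).mp hsum i₀ (Finset.mem_univ _)
    rw [if_pos hi₀, one_mul] at hzero
    have hx0 : x i₀ = 0 := by nlinarith
    apply hx
    funext i
    rw [hconst i i₀, hx0]; rfl

lemma inv_dot_lower {n : Type*} [Fintype n] [DecidableEq n]
    (A : Matrix n n ℝ) (hA : A.PosDef) (hAs : Aᵀ = A) (u : n → ℝ) (hu : u ⬝ᵥ u = 1)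
    (t : ℝ) (ht : 0 ≤ t) :
    2 / (1 + t) - (u ⬝ᵥ A *ᵥ u) / (1 + t)^2 ≤ u ⬝ᵥ A⁻¹ *ᵥ u := by
  have ht1 : (0:ℝ) < 1 + t := by linarith
  have hAinv : A * A⁻¹ = 1 := Matrix.mul_nonsing_inv A (Matrix.isUnit_iff_isUnit_det A |>.mp hA.isUnit)
  set w := A⁻¹ *ᵥ u with hw
  have hAw : A *ᵥ w = u := by
    rw [hw, Matrix.mulVec_mulVec, hAinv, Matrix.one_mulVec]
  set z := (1/(1+t)) • u with hz
  have hkey : 0 ≤ (w - z) ⬝ᵥ A *ᵥ (w - z) := by simpa using hA.posSemidef.dotProduct_mulVec_nonneg (w - z)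
  have e1 : w ⬝ᵥ A *ᵥ w = u ⬝ᵥ w := by rw [hAw, dotProduct_comm]
  have e2 : z ⬝ᵥ A *ᵥ w = 1/(1+t) := by
    rw [hz, smul_dotProduct, hAw, hu]; simp
  have e3 : w ⬝ᵥ A *ᵥ z = 1/(1+t) := by rw [dot_mulVec_symm' A hAs]; exact e2
  have e4 : z ⬝ᵥ A *ᵥ z = (1/(1+t))^2 * (u ⬝ᵥ A *ᵥ u) := by
    rw [hz, smul_dotProduct, Matrix.mulVec_smul, dotProduct_smul, smul_eq_mul, smul_eq_mul]
    ring
  rw [sub_dotProduct, Matrix.mulVec_sub, dotProduct_sub, dotProduct_sub, e1, e2, e3, e4] at hkey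
  have h5 : 2*(1/(1+t)) - (1/(1+t))^2 * (u ⬝ᵥ A *ᵥ u) ≤ u ⬝ᵥ w := by linarith
  calc 2 / (1 + t) - (u ⬝ᵥ A *ᵥ u) / (1 + t)^2
      = 2*(1/(1+t)) - (1/(1+t))^2 * (u ⬝ᵥ A *ᵥ u) := by
        have hne : (1+t) ≠ 0 := ht1.ne'
        field_simp
    _ ≤ u ⬝ᵥ w := h5

lemma dot_inv_ge {n : Type*} [Fintype n] [DecidableEq n]
    (A : Matrix n n ℝ) (hA : A.PosDef) (hAs : Aᵀ = A) (u : n → ℝ) (hu : u ⬝ᵥ u = 1)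
    (t : ℝ) (ht : 0 ≤ t) (ha : u ⬝ᵥ A *ᵥ u ≤ 1 + t) :
    1/(1+t) ≤ u ⬝ᵥ A⁻¹ *ᵥ u := by
  have ht1 : (0:ℝ) < 1 + t := by linarith
  have h := inv_dot_lower A hA hAs u hu t ht
  have h2 : (u ⬝ᵥ A *ᵥ u)/(1+t)^2 ≤ (1+t)/(1+t)^2 := by gcongr
  have h3 : (1+t)/(1+t)^2 = 1/(1+t) := by
    field_simp
  have h4 : 2/(1+t) = 2*(1/(1+t)) := by ring
  linarith

lemma dot_inv_gt {n : Type*} [Fintype n] [DecidableEq n]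
    (A : Matrix n n ℝ) (hA : A.PosDef) (hAs : Aᵀ = A) (u : n → ℝ) (hu : u ⬝ᵥ u = 1)
    (t : ℝ) (ht : 0 ≤ t) (ha : u ⬝ᵥ A *ᵥ u < 1 + t) :
    1/(1+t) < u ⬝ᵥ A⁻¹ *ᵥ u := by
  have ht1 : (0:ℝ) < 1 + t := by linarith
  have h := inv_dot_lower A hA hAs u hu t ht
  have h2 : (u ⬝ᵥ A *ᵥ u)/(1+t)^2 < (1+t)/(1+t)^2 := by gcongr
  have h3 : (1+t)/(1+t)^2 = 1/(1+t) := by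
    field_simp
  have h4 : 2/(1+t) = 2*(1/(1+t)) := by ring
  linarith

lemma cauchy_dot {n : Type*} [Fintype n] (u w : n → ℝ) (hu : u ⬝ᵥ u = 1) :
    (u ⬝ᵥ w)^2 ≤ w ⬝ᵥ w := by
  have h := Finset.sum_mul_sq_le_sq_mul_sq Finset.univ u w
  have h1 : ∑ i, u i ^ 2 = 1 := by
    rw [← hu]; simp [dotProduct, sq]
  have h2 : ∑ i, w i ^ 2 = w ⬝ᵥ w := by simp [dotProduct, sq]
  calc (u ⬝ᵥ w)^2 = (∑ i, u i * w i)^2 := by simp [dotProduct]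
    _ ≤ (∑ i, u i ^2) * ∑ i, w i ^2 := h
    _ = w ⬝ᵥ w := by rw [h1, h2, one_mul]

lemma normsq_inv_ge {n : Type*} [Fintype n] [DecidableEq n]
    (A : Matrix n n ℝ) (hA : A.PosDef) (hAs : Aᵀ = A) (u : n → ℝ) (hu : u ⬝ᵥ u = 1)
    (t : ℝ) (ht : 0 ≤ t) (ha : u ⬝ᵥ A *ᵥ u ≤ 1 + t) :
    (1/(1+t))^2 ≤ (A⁻¹ *ᵥ u) ⬝ᵥ (A⁻¹ *ᵥ u) := by
  have ht1 : (0:ℝ) < 1 + t := by linarith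
  have h1 := dot_inv_ge A hA hAs u hu t ht ha
  have h2 := cauchy_dot u (A⁻¹ *ᵥ u) hu
  have h0 : (0:ℝ) < 1/(1+t) := by positivity
  nlinarith

lemma normsq_inv_gt {n : Type*} [Fintype n] [DecidableEq n]
    (A : Matrix n n ℝ) (hA : A.PosDef) (hAs : Aᵀ = A) (u : n → ℝ) (hu : u ⬝ᵥ u = 1)
    (t : ℝ) (ht : 0 ≤ t) (ha : u ⬝ᵥ A *ᵥ u < 1 + t) :
    (1/(1+t))^2 < (A⁻¹ *ᵥ u) ⬝ᵥ (A⁻¹ *ᵥ u) := by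
  have ht1 : (0:ℝ) < 1 + t := by linarith
  have h1 := dot_inv_gt A hA hAs u hu t ht ha
  have h2 := cauchy_dot u (A⁻¹ *ᵥ u) hu
  have h0 : (0:ℝ) < 1/(1+t) := by positivity
  nlinarith

lemma frobSq_eq_sum_cols {m k : Type*} [Fintype m] [Fintype k] (M : Matrix m k ℝ) :
    frobSq M = ∑ j, (fun i => M i j) ⬝ᵥ (fun i => M i j) := by
  simp [frobSq, Matrix.trace, Matrix.diag, Matrix.mul_apply, dotProduct]

lemma resid_col {n : Type*} [Fintype n] [DecidableEq n]
    (Pm L : Matrix n n ℝ) (μ lamc : ℝ) (uc : n → ℝ)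
    (hLu : L *ᵥ uc = lamc • uc)
    (hinv : ∀ x, (Pm + μ • L)⁻¹ *ᵥ ((Pm + μ • L) *ᵥ x) = x) :
    uc - (Pm + μ • L)⁻¹ *ᵥ (Pm *ᵥ uc) = (μ * lamc) • ((Pm + μ • L)⁻¹ *ᵥ uc) := by
  have h1 : Pm *ᵥ uc = (Pm + μ • L) *ᵥ uc - (μ * lamc) • uc := by
    rw [Matrix.add_mulVec, Matrix.smul_mulVec, hLu, smul_smul]
    abel
  rw [h1, Matrix.mulVec_sub, hinv, Matrix.mulVec_smul]
  abel

end Aux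

/-- Paper's Corollary 4 (`main_GLR_iff`) for GLR under full-band noise: with
`Δⱼ = ξⱼ(Fin N) − ξⱼ(S)`, `τ = (k/N)·Δ₂/(−Δ₁)`, `σ² = k/(N·SNR)` and
`MSE(T) = ξ₁(T) + σ²·ξ₂(T)`, the set `S` is better than full observation iff either
(i) some `uᵢ` (2 ≤ i ≤ k, 1-indexed) has a nonzero entry outside `S` and `SNR < τ`, or
(ii) all such `uᵢ` vanish outside `S` and `Δ₂ > 0`. -/
theorem stmt_11 (N k : ℕ) (hN : 2 ≤ N) (hk2 : 2 ≤ k) (hkN : k ≤ N)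
    (G : SimpleGraph (Fin N)) [DecidableRel G.Adj] (hG : G.Connected)
    (lam : Fin N → ℝ) (hmono : StrictMono lam) (hlam0 : lam ⟨0, by omega⟩ = 0)
    (u : Fin N → Fin N → ℝ)
    (hortho : ∀ i j, u i ⬝ᵥ u j = if i = j then (1 : ℝ) else 0)
    (heig : ∀ i, (G.lapMatrix ℝ).mulVec (u i) = lam i • u i)
    (μ : ℝ) (hμ : 0 < μ)
    (S : Finset (Fin N)) (hS : S.Nonempty) (hSproper : S ≠ Finset.univ)
    (SNR : ℝ) (hSNR : 0 < SNR) :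
    let L := G.lapMatrix ℝ
    let UK : Matrix (Fin N) (Fin k) ℝ := Matrix.of fun i j => u (Fin.castLE hkN j) i
    let P : Finset (Fin N) → Matrix (Fin N) (Fin N) ℝ :=
      fun T => Matrix.diagonal fun j => if j ∈ T then 1 else 0
    let xi1 : Finset (Fin N) → ℝ := fun T => frobSq (UK - (P T + μ • L)⁻¹ * P T * UK)
    let xi2 : Finset (Fin N) → ℝ := fun T => frobSq ((P T + μ • L)⁻¹ * P T)
    let Δ₁ := xi1 Finset.univ - xi1 S
    let Δ₂ := xi2 Finset.univ - xi2 S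
    let τ := ((k : ℝ) / (N : ℝ)) * Δ₂ / (-Δ₁)
    let MSE : Finset (Fin N) → ℝ := fun T =>
      xi1 T + ((k : ℝ) / ((N : ℝ) * SNR)) * xi2 T
    (MSE S < MSE Finset.univ ↔
      (((∃ i : Fin N, 1 ≤ (i : ℕ) ∧ (i : ℕ) < k ∧ ∃ j, j ∉ S ∧ u i j ≠ 0) ∧ SNR < τ) ∨
       ((∀ i : Fin N, 1 ≤ (i : ℕ) → (i : ℕ) < k → ∀ j, j ∉ S → u i j = 0) ∧ 0 < Δ₂))) := by
  intro L UK P xi1 xi2 Δ₁ Δ₂ τ MSE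
  classical
  have hLpsd := SimpleGraph.posSemidef_lapMatrix ℝ G
  have hLsym : Lᵀ = L := G.isSymm_lapMatrix (R := ℝ)
  have huu : ∀ c : Fin N, u c ⬝ᵥ u c = 1 := fun c => by simpa using hortho c c
  have heig' : ∀ c, L *ᵥ u c = lam c • u c := heig
  -- eigenvalues nonneg
  have hlam_nonneg : ∀ c, 0 ≤ lam c := by
    intro c
    have h := hLpsd.dotProduct_mulVec_nonneg (u c)
    rw [star_trivial] at h
    have he : u c ⬝ᵥ (G.lapMatrix ℝ) *ᵥ u c = lam c := by
      rw [heig c, dotProduct_smul, huu c, smul_eq_mul, mul_one]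
    rwa [he] at h
  have hpos1 : ∀ c, (0:ℝ) < 1 + μ * lam c := by
    intro c; nlinarith [hlam_nonneg c]
  -- positive definiteness and inverses
  have hPD : ∀ T : Finset (Fin N), T.Nonempty → (P T + μ • L).PosDef := by
    intro T hT
    exact posDef_P_add_lap G hG μ hμ T hT
  have hAsym : ∀ T : Finset (Fin N), (P T + μ • L)ᵀ = P T + μ • L := by
    intro T
    rw [Matrix.transpose_add, Matrix.transpose_smul, Matrix.diagonal_transpose, hLsym]
  have hinvmul : ∀ T : Finset (Fin N), T.Nonempty →
      ∀ x : Fin N → ℝ, (P T + μ • L)⁻¹ *ᵥ ((P T + μ • L) *ᵥ x) = x := by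
    intro T hT x
    rw [Matrix.mulVec_mulVec,
      Matrix.nonsing_inv_mul _ ((Matrix.isUnit_iff_isUnit_det _).mp (hPD T hT).isUnit),
      Matrix.one_mulVec]
  have hunivne : (Finset.univ : Finset (Fin N)).Nonempty := ⟨⟨0, by omega⟩, Finset.mem_univ _⟩
  -- xi1 as a sum over columns
  have hxi1 : ∀ T : Finset (Fin N), T.Nonempty → xi1 T = ∑ j : Fin k,
      (μ * lam (Fin.castLE hkN j))^2 *
        (((P T + μ • L)⁻¹ *ᵥ u (Fin.castLE hkN j)) ⬝ᵥ ((P T + μ • L)⁻¹ *ᵥ u (Fin.castLE hkN j))) := by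
    intro T hT
    have h0 : xi1 T = frobSq (UK - (P T + μ • L)⁻¹ * P T * UK) := rfl
    rw [h0, frobSq_eq_sum_cols]
    refine Finset.sum_congr rfl fun j _ => ?_
    have hcol : (fun i => (UK - (P T + μ • L)⁻¹ * P T * UK) i j)
        = u (Fin.castLE hkN j) - (P T + μ • L)⁻¹ *ᵥ (P T *ᵥ u (Fin.castLE hkN j)) := by
      funext i
      have hentry : ((P T + μ • L)⁻¹ * P T * UK) i j
          = ((P T + μ • L)⁻¹ *ᵥ (P T *ᵥ u (Fin.castLE hkN j))) i := by
        rw [Matrix.mulVec_mulVec]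
        simp [Matrix.mul_apply, Matrix.mulVec, dotProduct, UK]
      simp [Matrix.sub_apply, hentry, UK]
    rw [hcol, resid_col (P T) L μ (lam (Fin.castLE hkN j)) (u (Fin.castLE hkN j))
      (heig' _) (hinvmul T hT)]
    rw [smul_dotProduct, dotProduct_smul, smul_eq_mul, smul_eq_mul, sq]
    ring
  -- the univ inverse acts diagonally
  have hPuniv : P Finset.univ = (1 : Matrix (Fin N) (Fin N) ℝ) := by
    ext i j
    by_cases h : i = j <;> simp [P, Matrix.diagonal_apply, Matrix.one_apply, h]
  have hAu : ∀ c : Fin N, (P Finset.univ + μ • L) *ᵥ u c = (1 + μ * lam c) • u c := by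
    intro c
    rw [Matrix.add_mulVec, Matrix.smul_mulVec, heig' c, hPuniv, Matrix.one_mulVec,
      smul_smul, add_smul, one_smul]
  have hwuniv : ∀ c : Fin N, (P Finset.univ + μ • L)⁻¹ *ᵥ u c = (1/(1 + μ * lam c)) • u c := by
    intro c
    have h3 : (1 + μ * lam c) • ((P Finset.univ + μ • L)⁻¹ *ᵥ u c) = u c := by
      rw [← Matrix.mulVec_smul, ← hAu c, hinvmul Finset.univ hunivne]
    have := (inv_smul_eq_iff₀ (hpos1 c).ne').mpr h3.symm
    rw [one_div]
    exact this.symm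
  have hxi1univ : xi1 Finset.univ = ∑ j : Fin k,
      (μ * lam (Fin.castLE hkN j))^2 * (1/(1 + μ * lam (Fin.castLE hkN j)))^2 := by
    rw [hxi1 Finset.univ hunivne]
    refine Finset.sum_congr rfl fun j _ => ?_
    rw [hwuniv, smul_dotProduct, dotProduct_smul, huu, smul_eq_mul, smul_eq_mul, sq]
    ring
  -- quadratic form values on S
  have hq : ∀ c : Fin N, u c ⬝ᵥ (P S + μ • L) *ᵥ u c
      = (u c ⬝ᵥ P S *ᵥ u c) + μ * lam c := by
    intro c
    rw [Matrix.add_mulVec, dotProduct_add, Matrix.smul_mulVec, heig' c,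
      dotProduct_smul, dotProduct_smul, huu c]
    simp [smul_eq_mul]
  have hq_le : ∀ c : Fin N, u c ⬝ᵥ P S *ᵥ u c ≤ 1 := by
    intro c
    have : u c ⬝ᵥ P S *ᵥ u c = ∑ i : Fin N, u c i * ((if i ∈ S then (1:ℝ) else 0) * u c i) := by
      simp [P, dotProduct, Matrix.mulVec_diagonal]
    rw [this]
    calc (∑ i : Fin N, u c i * ((if i ∈ S then (1:ℝ) else 0) * u c i))
        ≤ ∑ i : Fin N, u c i * u c i :=
          Finset.sum_le_sum fun i _ => by split <;> simp [mul_self_nonneg]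
      _ = 1 := huu c
  have hq_lt : ∀ c : Fin N, (∃ j, j ∉ S ∧ u c j ≠ 0) → u c ⬝ᵥ P S *ᵥ u c < 1 := by
    intro c ⟨j0, hj0, hne⟩
    have h1 : u c ⬝ᵥ P S *ᵥ u c = ∑ i : Fin N, u c i * ((if i ∈ S then (1:ℝ) else 0) * u c i) := by
      simp [P, dotProduct, Matrix.mulVec_diagonal]
    rw [h1]
    have hlt : (∑ i : Fin N, u c i * ((if i ∈ S then (1:ℝ) else 0) * u c i))
        < ∑ i : Fin N, u c i * u c i := by
      refine Finset.sum_lt_sum (fun i _ => by split <;> simp [mul_self_nonneg])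
        ⟨j0, Finset.mem_univ _, ?_⟩
      rw [if_neg hj0]
      simpa using mul_self_pos.mpr hne
    exact lt_of_lt_of_eq hlt (huu c)
  -- per-column norm bounds on S
  have hPDS := hPD S hS
  have hASsym := hAsym S
  have hmn : 0 ≤ μ := hμ.le
  have hwS_ge : ∀ c : Fin N,
      (1/(1 + μ*lam c))^2 ≤ ((P S + μ • L)⁻¹ *ᵥ u c) ⬝ᵥ ((P S + μ • L)⁻¹ *ᵥ u c) := by
    intro c
    refine normsq_inv_ge _ hPDS hASsym (u c) (huu c) (μ * lam c)
      (mul_nonneg hmn (hlam_nonneg c)) ?_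
    rw [hq c]
    have := hq_le c
    linarith
  have hwS_gt : ∀ c : Fin N, (∃ j, j ∉ S ∧ u c j ≠ 0) →
      (1/(1 + μ*lam c))^2 < ((P S + μ • L)⁻¹ *ᵥ u c) ⬝ᵥ ((P S + μ • L)⁻¹ *ᵥ u c) := by
    intro c hc
    refine normsq_inv_gt _ hPDS hASsym (u c) (huu c) (μ * lam c)
      (mul_nonneg hmn (hlam_nonneg c)) ?_
    rw [hq c]
    have := hq_lt c hc
    linarith
  have hwS_eq : ∀ c : Fin N, (∀ j, j ∉ S → u c j = 0) →
      ((P S + μ • L)⁻¹ *ᵥ u c) ⬝ᵥ ((P S + μ • L)⁻¹ *ᵥ u c) = (1/(1 + μ*lam c))^2 := by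
    intro c hvan
    have hPu : P S *ᵥ u c = u c := by
      funext i
      rw [show (P S *ᵥ u c) i = (if i ∈ S then (1:ℝ) else 0) * u c i from by
        simp [P, Matrix.mulVec_diagonal]]
      by_cases h : i ∈ S
      · rw [if_pos h, one_mul]
      · rw [if_neg h, zero_mul, hvan i h]
    have hAc : (P S + μ • L) *ᵥ u c = (1 + μ*lam c) • u c := by
      rw [Matrix.add_mulVec, Matrix.smul_mulVec, heig' c, hPu, smul_smul, add_smul, one_smul]
    have h3 : (1 + μ*lam c) • ((P S + μ • L)⁻¹ *ᵥ u c) = u c := by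
      rw [← Matrix.mulVec_smul, ← hAc, hinvmul S hS]
    have h4 : (P S + μ • L)⁻¹ *ᵥ u c = (1/(1 + μ*lam c)) • u c := by
      have := (inv_smul_eq_iff₀ (hpos1 c).ne').mpr h3.symm
      rw [one_div]
      exact this.symm
    rw [h4, smul_dotProduct, dotProduct_smul, huu c, smul_eq_mul, smul_eq_mul, sq]
    ring
  -- Δ₁ as a sum of termwise differences
  have hΔ1 : Δ₁ = ∑ j : Fin k,
      ((μ * lam (Fin.castLE hkN j))^2 * (1/(1 + μ*lam (Fin.castLE hkN j)))^2
        - (μ * lam (Fin.castLE hkN j))^2 *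
          (((P S + μ • L)⁻¹ *ᵥ u (Fin.castLE hkN j)) ⬝ᵥ ((P S + μ • L)⁻¹ *ᵥ u (Fin.castLE hkN j)))) := by
    have h0 : Δ₁ = xi1 Finset.univ - xi1 S := rfl
    rw [h0, hxi1univ, hxi1 S hS, ← Finset.sum_sub_distrib]
  -- MSE comparison in terms of Δ₁, Δ₂
  have hMSE : (MSE S < MSE Finset.univ) ↔ 0 < Δ₁ + ((k:ℝ)/((N:ℝ)*SNR)) * Δ₂ := by
    have h1 : MSE S = xi1 S + ((k:ℝ)/((N:ℝ)*SNR)) * xi2 S := rfl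
    have h2 : MSE Finset.univ = xi1 Finset.univ + ((k:ℝ)/((N:ℝ)*SNR)) * xi2 Finset.univ := rfl
    have h3 : Δ₁ = xi1 Finset.univ - xi1 S := rfl
    have h4 : Δ₂ = xi2 Finset.univ - xi2 S := rfl
    rw [h1, h2, h3, h4, mul_sub]
    constructor <;> intro h <;> linarith
  have hNpos : (0:ℝ) < (N:ℝ) := by
    have : 0 < N := by omega
    exact_mod_cast this
  have hkpos : (0:ℝ) < (k:ℝ) := by
    have : 0 < k := by omega
    exact_mod_cast this
  have hσ2 : (0:ℝ) < (k:ℝ)/((N:ℝ)*SNR) := by positivity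
  by_cases hQ : ∀ i : Fin N, 1 ≤ (i : ℕ) → (i : ℕ) < k → ∀ j, j ∉ S → u i j = 0
  · -- equality case : Δ₁ = 0
    have hΔ10 : Δ₁ = 0 := by
      rw [hΔ1]
      refine Finset.sum_eq_zero fun j _ => ?_
      by_cases h0 : ((Fin.castLE hkN j : Fin N) : ℕ) = 0
      · have hc0 : (Fin.castLE hkN j : Fin N) = ⟨0, by omega⟩ := Fin.ext h0
        rw [hc0, hlam0]
        ring
      · have h1 : 1 ≤ ((Fin.castLE hkN j : Fin N) : ℕ) := Nat.one_le_iff_ne_zero.mpr h0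
        have h2 : ((Fin.castLE hkN j : Fin N) : ℕ) < k := by
          simpa using j.isLt
        rw [hwS_eq _ (hQ _ h1 h2), sub_self]
    rw [hMSE, hΔ10, zero_add]
    constructor
    · intro h
      right
      refine ⟨hQ, ?_⟩
      by_contra hcon
      push_neg at hcon
      nlinarith [mul_nonpos_of_nonneg_of_nonpos hσ2.le hcon]
    · rintro (⟨⟨i, hi1, hik, j, hj, hne⟩, _⟩ | ⟨_, h2⟩)
      · exact absurd (hQ i hi1 hik j hj) hne
      · exact mul_pos hσ2 h2
  · -- strict case : Δ₁ < 0
    push_neg at hQ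
    obtain ⟨i0, hi1, hik, j0, hj0, hne⟩ := hQ
    have hEx : ∃ i : Fin N, 1 ≤ (i:ℕ) ∧ (i:ℕ) < k ∧ ∃ j, j ∉ S ∧ u i j ≠ 0 :=
      ⟨i0, hi1, hik, j0, hj0, hne⟩
    have hΔ1neg : Δ₁ < 0 := by
      rw [hΔ1]
      have hlt : (∑ j : Fin k,
          ((μ * lam (Fin.castLE hkN j))^2 * (1/(1 + μ*lam (Fin.castLE hkN j)))^2
            - (μ * lam (Fin.castLE hkN j))^2 *
              (((P S + μ • L)⁻¹ *ᵥ u (Fin.castLE hkN j)) ⬝ᵥ ((P S + μ • L)⁻¹ *ᵥ u (Fin.castLE hkN j)))))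
          < ∑ _j : Fin k, (0:ℝ) := by
        refine Finset.sum_lt_sum (fun j _ => ?_) ⟨⟨(i0:ℕ), hik⟩, Finset.mem_univ _, ?_⟩
        · have := mul_le_mul_of_nonneg_left (hwS_ge (Fin.castLE hkN j))
            (sq_nonneg (μ * lam (Fin.castLE hkN j)))
          linarith
        · have hceq : (Fin.castLE hkN (⟨(i0:ℕ), hik⟩ : Fin k) : Fin N) = i0 := Fin.ext rfl
          rw [hceq]
          have hlampos : 0 < lam i0 := by
            have h01 : (⟨0, by omega⟩ : Fin N) < i0 := by
              rw [Fin.lt_def]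
              simpa using Nat.lt_of_lt_of_le Nat.zero_lt_one hi1
            have := hmono h01
            rwa [hlam0] at this
          have hapos : 0 < (μ * lam i0)^2 := by positivity
          have := mul_lt_mul_of_pos_left (hwS_gt i0 ⟨j0, hj0, hne⟩) hapos
          linarith
      simpa using hlt
    rw [hMSE]
    have hd : (0:ℝ) < -Δ₁ := by linarith
    have hform : ((k:ℝ)/((N:ℝ)*SNR)) * Δ₂ = ((k:ℝ)/(N:ℝ)) * Δ₂ / SNR := by ring
    have hτd : τ = ((k:ℝ)/(N:ℝ)) * Δ₂ / (-Δ₁) := rfl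
    have harith : (0 < Δ₁ + ((k:ℝ)/((N:ℝ)*SNR)) * Δ₂) ↔ SNR < τ := by
      rw [hform, hτd, lt_div_iff₀ hd]
      constructor
      · intro h
        have h5 : -Δ₁ < ((k:ℝ)/(N:ℝ)) * Δ₂ / SNR := by linarith
        have h6 := (lt_div_iff₀ hSNR).mp h5
        linarith
      · intro h
        have h5 : -Δ₁ < ((k:ℝ)/(N:ℝ)) * Δ₂ / SNR := (lt_div_iff₀ hSNR).mpr (by linarith)
        linarith
    constructor
    · intro h
      exact Or.inl ⟨hEx, harith.mp h⟩
    · rintro (⟨_, hlt⟩ | ⟨hQ2, _⟩)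
      · exact harith.mpr hlt
      · exact absurd (hQ2 i0 hi1 hik j0 hj0) hne
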